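/- arXiv:1509.05707 — 2 statements merged into one kernel-verified Lean document; each statement's English description precedes it below -/
import Mathlib

section
/- Let F be a field of characteristic p (where p is a prime or p = 0), let f ∈ F[x_1,…,x_d] be a nonzero polynomial with f(0) = 0, and if F is finite assume moreover that f is reduced (every exponent occurring in f is less than |F|). Let α : F^d → F be the evaluation function α(a_1,…,a_d) = f(a_1,…,a_d). Then the combinatorial degree of α equals deg_p(f), the p-degree of f. -/
open MvPolynomial Finset

/-- The `n`-th defect of a function `α : V → F` (with `α 0 = 0` intended):
`Δ^n α(u_1,…,u_n) = Σ_{∅ ≠ S ⊆ {1,…,n}} (−1)^{n−|S|} α(Σ_{i∈S} u_i)`. -/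
def fnDefect {F V : Type*} [Field F] [AddCommGroup V] (α : V → F) (n : ℕ)
    (u : Fin n → V) : F :=
  ∑ S ∈ Finset.univ.powerset.filter (fun S : Finset (Fin n) => S.Nonempty),
    (-1 : F) ^ (n - S.card) * α (∑ i ∈ S, u i)

/-- The `p`-weight of a natural number: the sum of its base-`p` digits (and `t` itself
when `p = 0`). -/
def pWeight (p t : ℕ) : ℕ := if p = 0 then t else (Nat.digits p t).sum

/-- The `p`-degree of a polynomial: the maximum over the monomials in its support of the
sum of the `p`-weights of the exponents. -/
def pDeg {F : Type*} [Field F] {d : ℕ} (p : ℕ) (f : MvPolynomial (Fin d) F) : ℕ :=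
  f.support.sup fun m => ∑ j, pWeight p (m j)



section Arith
variable {p : ℕ}

lemma pWeight_of_prime (hp : p.Prime) (t : ℕ) : pWeight p t = (Nat.digits p t).sum := by
  simp [pWeight, hp.ne_zero]

@[simp] lemma pWeight_zero (p : ℕ) : pWeight p 0 = 0 := by simp [pWeight]

lemma pWeight_le (p t : ℕ) : pWeight p t ≤ t := by
  unfold pWeight; split
  · exact le_refl t
  · exact Nat.digit_sum_le p t

lemma pWeight_step (hp : p.Prime) (t : ℕ) :
    pWeight p t = t % p + pWeight p (t / p) := by
  rcases Nat.eq_zero_or_pos t with h | h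
  · simp [h]
  · rw [pWeight_of_prime hp, pWeight_of_prime hp,
      Nat.digits_def' hp.one_lt h, List.sum_cons]

lemma pWeight_eq_zero_iff (hp : p.Prime) {t : ℕ} : pWeight p t = 0 ↔ t = 0 := by
  constructor
  · intro h
    induction t using Nat.strong_induction_on with
    | _ t ih =>
      rcases Nat.eq_zero_or_pos t with h0 | h0
      · exact h0
      rw [pWeight_step hp] at h
      have h1 := Nat.eq_zero_of_add_eq_zero_right h
      have h2 := Nat.eq_zero_of_add_eq_zero_left h
      have h3 : t / p = 0 := by
        rcases Nat.eq_zero_or_pos (t / p) with h3 | h3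
        · exact h3
        · exact ih _ (Nat.div_lt_self h0 hp.one_lt) h2
      have := Nat.div_add_mod t p
      rw [h3, Nat.mul_zero] at this
      omega
  · rintro rfl; simp

lemma pWeight_pos (hp : p.Prime) {t : ℕ} (ht : t ≠ 0) : 1 ≤ pWeight p t :=
  Nat.one_le_iff_ne_zero.mpr (fun h => ht ((pWeight_eq_zero_iff hp).mp h))

lemma pWeight_mul_p (hp : p.Prime) (x : ℕ) : pWeight p (p * x) = pWeight p x := by
  rw [pWeight_step hp, Nat.mul_mod_right, Nat.mul_div_cancel_left _ hp.pos, Nat.zero_add]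

lemma pWeight_pow_mul (hp : p.Prime) (k x : ℕ) : pWeight p (p ^ k * x) = pWeight p x := by
  induction k with
  | zero => simp
  | succ k ih => rw [pow_succ, mul_comm (p^k) p, mul_assoc, pWeight_mul_p hp, ih]

lemma pWeight_one (hp : p.Prime) : pWeight p 1 = 1 := by
  rw [pWeight_step hp, Nat.mod_eq_of_lt hp.one_lt, Nat.div_eq_of_lt hp.one_lt]; simp

lemma pWeight_pow (hp : p.Prime) (k : ℕ) : pWeight p (p ^ k) = 1 := by
  simpa using (pWeight_pow_mul hp k 1).trans (pWeight_one hp)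

/-- decrement: if `p ∤ s` then `ω (s-1) + 1 = ω s`. -/
lemma pWeight_pred (hp : p.Prime) {s : ℕ} (hs : ¬ p ∣ s) :
    pWeight p (s - 1) + 1 = pWeight p s := by
  have hs0 : s ≠ 0 := by rintro rfl; exact hs ⟨0, rfl⟩
  have hr : s % p ≠ 0 := fun h => hs (Nat.dvd_of_mod_eq_zero h)
  have h1 : s - 1 = p * (s / p) + (s % p - 1) := by
    have := Nat.div_add_mod s p; omega
  have hrp : s % p - 1 < p := by
    have := Nat.mod_lt s hp.pos; omega
  rw [pWeight_step hp (s - 1), pWeight_step hp s, h1,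
    Nat.mul_add_mod, Nat.mod_eq_of_lt hrp, Nat.mul_add_div hp.pos, Nat.div_eq_of_lt hrp,
    Nat.add_zero]
  simp only [Nat.add_zero]
  omega

/-- Legendre-based: `ω a + ω b = ω (a+b) + (p-1) * v_p(choose)`. -/
lemma pWeight_add_eq (hp : p.Prime) (a b : ℕ) :
    pWeight p a + pWeight p b
      = pWeight p (a + b) + (p - 1) * padicValNat p ((a + b).choose a) := by
  haveI : Fact p.Prime := ⟨hp⟩
  have hfac : (a + b).choose a * (a.factorial * b.factorial) = (a + b).factorial := by
    have h := Nat.choose_mul_factorial_mul_factorial (Nat.le_add_right a b)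
    rw [Nat.add_sub_cancel_left] at h
    rw [← h]; ring
  have hv : padicValNat p ((a+b).factorial)
      = padicValNat p ((a+b).choose a) + (padicValNat p a.factorial + padicValNat p b.factorial) := by
    rw [← hfac, padicValNat.mul (Nat.choose_pos (Nat.le_add_right a b)).ne'
        (Nat.mul_ne_zero a.factorial_ne_zero b.factorial_ne_zero),
      padicValNat.mul a.factorial_ne_zero b.factorial_ne_zero]
  have la := sub_one_mul_padicValNat_factorial (p := p) a
  have lb := sub_one_mul_padicValNat_factorial (p := p) b
  have lab := sub_one_mul_padicValNat_factorial (p := p) (a + b)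
  rw [← pWeight_of_prime hp] at la lb lab
  have ha' := pWeight_le p a
  have hb' := pWeight_le p b
  have hab' := pWeight_le p (a + b)
  have hv' := congrArg (fun x => (p - 1) * x) hv
  simp only [Nat.mul_add, lab, la, lb] at hv'
  omega

end Arith

section FieldArith
variable {F : Type*} [Field F] {p : ℕ} [CharP F p]

/-- L1: if the binomial coefficient is nonzero in `F`, the `p`-weight is additive. -/
lemma pWeight_add_of_choose_ne_zero (hp : p.Prime ∨ p = 0) {a b : ℕ}
    (h : (((a + b).choose a : ℕ) : F) ≠ 0) :
    pWeight p a + pWeight p b = pWeight p (a + b) := by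
  rcases hp with hp | rfl
  · have hv : padicValNat p ((a + b).choose a) = 0 := by
      by_contra hv
      apply h
      rw [CharP.cast_eq_zero_iff F p]
      exact dvd_trans (dvd_pow_self p hv) pow_padicValNat_dvd
    have := pWeight_add_eq hp a b
    rw [hv, Nat.mul_zero, Nat.add_zero] at this
    exact this
  · simp [pWeight]

/-- converse of L1 for primes. -/
lemma choose_ne_zero_of_pWeight_add (hp : p.Prime ∨ p = 0) {a b : ℕ}
    (h : pWeight p a + pWeight p b = pWeight p (a + b)) :
    (((a + b).choose a : ℕ) : F) ≠ 0 := by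
  have hpos : 0 < (a + b).choose a := Nat.choose_pos (Nat.le_add_right a b)
  rcases hp with hp | rfl
  · have := pWeight_add_eq hp a b
    rw [h] at this
    have hv : (p - 1) * padicValNat p ((a + b).choose a) = 0 := by omega
    have hv0 : padicValNat p ((a + b).choose a) = 0 := by
      have := hp.two_le; rcases mul_eq_zero.mp hv with h' | h' <;> omega
    intro h0
    rw [CharP.cast_eq_zero_iff F p] at h0
    have hdvd := h0
    haveI : Fact p.Prime := ⟨hp⟩
    have := (dvd_iff_padicValNat_ne_zero hpos.ne').mp hdvd
    omega
  · haveI : CharZero F := CharP.charP_to_charZero F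
    exact Nat.cast_ne_zero.mpr hpos.ne'

/-- L2: one can remove one unit of `p`-weight, keeping a nonzero binomial coefficient. -/
lemma exists_pWeight_pred (hp : p.Prime ∨ p = 0) {t : ℕ} (ht : t ≠ 0) :
    ∃ s, s < t ∧ pWeight p s + 1 = pWeight p t ∧ ((t.choose s : ℕ) : F) ≠ 0 := by
  rcases hp with hp | rfl
  · set k := t.factorization p with hk
    set s₀ := t / p ^ k with hs
    have hdvd : p ^ k ∣ t := Nat.ordProj_dvd t p
    have hnd : ¬ p ∣ s₀ := Nat.not_dvd_ordCompl hp ht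
    have hts : t = p ^ k * s₀ := (Nat.ordProj_mul_ordCompl_eq_self t p).symm
    have hs0 : s₀ ≠ 0 := by rintro h; rw [h, Nat.mul_zero] at hts; exact ht hts
    refine ⟨t - p ^ k, ?_, ?_, ?_⟩
    · have hpk : 0 < p ^ k := pow_pos hp.pos k
      have hle : p ^ k ≤ t := Nat.le_of_dvd (Nat.pos_of_ne_zero ht) hdvd
      omega
    · have h1 : t - p ^ k = p ^ k * (s₀ - 1) := by
        rw [Nat.mul_sub_one] ; omega
      rw [h1, pWeight_pow_mul hp, hts, pWeight_pow_mul hp]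
      exact pWeight_pred hp hnd
    · have hle : p ^ k ≤ t := Nat.le_of_dvd (Nat.pos_of_ne_zero ht) hdvd
      have h2 : (t - p ^ k) + p ^ k = t := Nat.sub_add_cancel hle
      have h3 : pWeight p (t - p ^ k) + pWeight p (p ^ k)
          = pWeight p ((t - p ^ k) + p ^ k) := by
        rw [h2]
        have h1 : t - p ^ k = p ^ k * (s₀ - 1) := by rw [Nat.mul_sub_one]; omega
        rw [h1, pWeight_pow_mul hp, pWeight_pow hp, hts, pWeight_pow_mul hp]
        exact pWeight_pred hp hnd
      have := choose_ne_zero_of_pWeight_add (F := F) (Or.inl hp) h3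
      rwa [h2] at this
  · refine ⟨t - 1, by omega, by simp [pWeight]; omega, ?_⟩
    haveI : CharZero F := CharP.charP_to_charZero F
    exact Nat.cast_ne_zero.mpr (Nat.choose_pos (by omega)).ne'

end FieldArith


section Poly
variable {F : Type*} [Field F] {d : ℕ}

lemma X_add_C_pow (j : Fin d) (c : F) (n : ℕ) :
    (X j + C c : MvPolynomial (Fin d) F) ^ n
      = ∑ k ∈ Finset.range (n + 1),
          monomial (Finsupp.single j k) ((n.choose k : F) * c ^ (n - k)) := by
  rw [add_pow]
  refine Finset.sum_congr rfl fun k _ => ?_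
  rw [X_pow_eq_monomial, ← C_pow, ← map_natCast (C : F →+* MvPolynomial (Fin d) F),
    mul_assoc, ← map_mul, mul_comm (monomial _ 1) _, C_mul_monomial, mul_one, mul_comm]

lemma Iic_zero_finsupp : (Finset.Iic (0 : Fin d →₀ ℕ)) = {0} := by
  ext e; simp [Finset.mem_Iic, le_zero_iff]

lemma prod_add_pow (v : Fin d → F) (m : Fin d →₀ ℕ) :
    (∏ j, (X j + C (v j) : MvPolynomial (Fin d) F) ^ (m j))
      = ∑ e ∈ Finset.Iic m,
          monomial e (∏ j, (((m j).choose (e j) : F) * v j ^ (m j - e j))) := by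
  induction m using Finsupp.induction with
  | zero =>
    rw [Iic_zero_finsupp]
    simp [monomial_zero']
  | single_add a n f ha hn ih =>
    have hfa : f a = 0 := Finsupp.notMem_support_iff.mp ha
    have hL : (∏ j, (X j + C (v j) : MvPolynomial (Fin d) F) ^ ((Finsupp.single a n + f) j))
        = (X a + C (v a)) ^ n * ∏ j, (X j + C (v j)) ^ (f j) := by
      simp only [Finsupp.add_apply, pow_add, Finset.prod_mul_distrib]
      congr 1
      refine Finset.prod_eq_single a (fun j _ hj => ?_) (fun h => absurd (mem_univ a) h) |>.trans ?_
      · rw [Finsupp.single_eq_of_ne hj, pow_zero]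
      · rw [Finsupp.single_eq_same]
    rw [hL, X_add_C_pow, ih, Finset.sum_mul_sum]
    have : ∀ k ∈ Finset.range (n+1), ∀ e ∈ Finset.Iic f,
        (monomial (Finsupp.single a k) ((n.choose k : F) * v a ^ (n - k))
          * monomial e (∏ j, (((f j).choose (e j) : F) * v j ^ (f j - e j))))
        = monomial (Finsupp.single a k + e)
            (((n.choose k : F) * v a ^ (n - k))
              * ∏ j, (((f j).choose (e j) : F) * v j ^ (f j - e j))) := by
      intro k _ e _
      rw [monomial_mul]
    rw [Finset.sum_congr rfl (fun k hk => Finset.sum_congr rfl (fun e he => this k hk e he))]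
    rw [← Finset.sum_product']
    refine Finset.sum_nbij' (i := fun kp => Finsupp.single a kp.1 + kp.2)
      (j := fun e => (e a, e.erase a)) ?_ ?_ ?_ ?_ ?_
    · rintro ⟨k, e⟩ hke
      dsimp only
      rw [Finset.mem_product, Finset.mem_range, Finset.mem_Iic] at hke
      dsimp only at hke
      rw [Finset.mem_Iic, Finsupp.le_def]
      intro j
      have hj2 := (Finsupp.le_def.mp hke.2) j
      rcases eq_or_ne j a with rfl | hj
      · rw [hfa] at hj2
        simp only [Finsupp.add_apply, Finsupp.single_eq_same]
        omega
      · simp only [Finsupp.add_apply, Finsupp.single_eq_of_ne hj]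
        omega
    · intro e' he'
      rw [Finset.mem_Iic, Finsupp.le_def] at he'
      rw [Finset.mem_product, Finset.mem_range, Finset.mem_Iic]
      constructor
      · have := he' a
        simp only [Finsupp.add_apply, Finsupp.single_eq_same, hfa] at this
        omega
      · rw [Finsupp.le_def]
        intro j
        rcases eq_or_ne j a with rfl | hj
        · simp [Finsupp.erase_same]
        · have := he' j
          simp only [Finsupp.add_apply, Finsupp.single_eq_of_ne hj] at this
          simpa [Finsupp.erase_ne hj] using this
    · rintro ⟨k, e⟩ hke
      dsimp only
      rw [Finset.mem_product, Finset.mem_range, Finset.mem_Iic] at hke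
      dsimp only at hke
      have hea : e a = 0 := by
        have := (Finsupp.le_def.mp hke.2) a
        rw [hfa] at this
        omega
      have h1 : (Finsupp.single a k + e) a = k := by
        simp [Finsupp.add_apply, Finsupp.single_eq_same, hea]
      have h2 : (Finsupp.single a k + e).erase a = e := by
        rw [Finsupp.erase_add, Finsupp.erase_single, Finsupp.erase_of_notMem_support, zero_add]
        rw [Finsupp.notMem_support_iff]
        exact hea
      simp [h1, h2]
    · intro e' _
      exact Finsupp.single_add_erase a e'
    · rintro ⟨k, e⟩ hke
      dsimp only
      rw [Finset.mem_product, Finset.mem_range, Finset.mem_Iic] at hke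
      dsimp only at hke
      have hea : e a = 0 := by
        have := (Finsupp.le_def.mp hke.2) a
        rw [hfa] at this
        omega
      congr 1
      rw [← Finset.mul_prod_erase univ
        (fun j => (((Finsupp.single a n + f) j).choose ((Finsupp.single a k + e) j) : F)
          * v j ^ ((Finsupp.single a n + f) j - (Finsupp.single a k + e) j)) (mem_univ a)]
      rw [← Finset.mul_prod_erase univ
        (fun j => (((f j).choose (e j)) : F) * v j ^ (f j - e j)) (mem_univ a)]
      simp only [Finsupp.add_apply, Finsupp.single_eq_same, hfa, hea, Nat.add_zero,
        Nat.choose_self, Nat.cast_one, Nat.sub_self, pow_zero, mul_one, one_mul]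
      rw [mul_assoc, ← mul_assoc]
      congr 1
      refine Finset.prod_congr rfl fun x hx => ?_
      have hx' : x ≠ a := (Finset.mem_erase.mp hx).1
      rw [Finsupp.single_eq_of_ne hx', Finsupp.single_eq_of_ne hx',
        Nat.zero_add, Nat.zero_add]

end Poly

section Shift
variable {F : Type*} [Field F] {d : ℕ}

/-- shift of a polynomial by `v`. -/
noncomputable def shf (v : Fin d → F) (f : MvPolynomial (Fin d) F) : MvPolynomial (Fin d) F :=
  aeval (fun j => X j + C (v j)) f

lemma aeval_eq_eval' (x : Fin d → F) (g : MvPolynomial (Fin d) F) :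
    (aeval x) g = eval x g := by
  rw [← coe_aeval_eq_eval]; rfl

lemma shf_add (v : Fin d → F) (f g : MvPolynomial (Fin d) F) :
    shf v (f + g) = shf v f + shf v g := map_add _ _ _

lemma eval_shf (x v : Fin d → F) (f : MvPolynomial (Fin d) F) :
    eval x (shf v f) = eval (x + v) f := by
  rw [← aeval_eq_eval' x, shf, comp_aeval_apply]
  have h : (fun i => (aeval x) (X i + C (v i))) = x + v := by
    funext j
    simp [aeval_eq_eval']
  rw [h, aeval_eq_eval']

lemma shf_monomial (v : Fin d → F) (m : Fin d →₀ ℕ) (c : F) :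
    shf v (monomial m c) = C c * ∏ j, (X j + C (v j)) ^ (m j) := by
  rw [shf, aeval_monomial, Finsupp.prod_pow, algebraMap_eq]

lemma coeff_shf (v : Fin d → F) (f : MvPolynomial (Fin d) F) (e : Fin d →₀ ℕ) :
    coeff e (shf v f)
      = ∑ m ∈ f.support, (if e ≤ m then
          coeff m f * ∏ j, (((m j).choose (e j) : F) * v j ^ (m j - e j)) else 0) := by
  conv_lhs => rw [← support_sum_monomial_coeff f]
  rw [show shf v (∑ m ∈ f.support, monomial m (coeff m f))
      = ∑ m ∈ f.support, shf v (monomial m (coeff m f)) from map_sum _ _ _, coeff_sum]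
  refine Finset.sum_congr rfl fun m _ => ?_
  rw [shf_monomial, prod_add_pow, Finset.mul_sum, coeff_sum]
  have : ∀ e' ∈ Finset.Iic m,
      coeff e (C (coeff m f) * monomial e' (∏ j, (((m j).choose (e' j) : F) * v j ^ (m j - e' j))))
      = (if e' = e then coeff m f * ∏ j, (((m j).choose (e' j) : F) * v j ^ (m j - e' j)) else 0) := by
    intro e' _
    rw [coeff_C_mul, coeff_monomial, mul_ite, mul_zero]
  rw [Finset.sum_congr rfl this, Finset.sum_ite_eq' (Finset.Iic m) e]
  simp only [Finset.mem_Iic]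

variable {p : ℕ} [CharP F p]

/-- Support control for `shf v f - f`: every monomial is dominated by a monomial of `f` and
has strictly smaller `p`-weight degree. -/
lemma support_shf_sub (hp : p.Prime ∨ p = 0) (v : Fin d → F) (f : MvPolynomial (Fin d) F)
    {e : Fin d →₀ ℕ} (he : e ∈ (shf v f - f).support) :
    ∃ m ∈ f.support, e ≤ m ∧ (∑ j, pWeight p (e j)) < (∑ j, pWeight p (m j)) := by
  rw [mem_support_iff, coeff_sub, coeff_shf] at he
  set T : (Fin d →₀ ℕ) → F := fun m => if e ≤ m then
      coeff m f * ∏ j, (((m j).choose (e j) : F) * v j ^ (m j - e j)) else 0 with hT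
  have hTe : T e = coeff e f := by
    simp [hT]
  have hex : ∃ m ∈ f.support, m ≠ e ∧ T m ≠ 0 := by
    by_contra h
    push_neg at h
    have h1 : ∑ m ∈ f.support, T m = T e := by
      refine Finset.sum_eq_single e (fun m hm hme => h m hm hme) (fun hne => ?_)
      rw [hTe]
      exact notMem_support_iff.mp hne
    rw [h1, hTe, sub_self] at he
    exact he rfl
  obtain ⟨m, hm, hme, hTm⟩ := hex
  replace hTm : (if e ≤ m then
      coeff m f * ∏ j, (((m j).choose (e j) : F) * v j ^ (m j - e j)) else 0) ≠ 0 := hTm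
  split_ifs at hTm with hle
  · refine ⟨m, hm, hle, ?_⟩
    have hprod : ∀ j : Fin d, (((m j).choose (e j) : F)) ≠ 0 := by
      intro j
      have := right_ne_zero_of_mul hTm
      rw [Finset.prod_ne_zero_iff] at this
      exact left_ne_zero_of_mul (this j (Finset.mem_univ j))
    have hwle : ∀ j : Fin d, pWeight p (e j) ≤ pWeight p (m j) := by
      intro j
      have hj := Finsupp.le_def.mp hle j
      have hcast : (((e j + (m j - e j)).choose (e j) : ℕ) : F) ≠ 0 := by
        rw [Nat.add_sub_cancel' hj]; exact hprod j
      have := pWeight_add_of_choose_ne_zero hp hcast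
      rw [Nat.add_sub_cancel' hj] at this
      omega
    have hexj : ∃ j : Fin d, e j < m j := by
      by_contra hc
      push_neg at hc
      exact hme (Finsupp.ext fun j => le_antisymm (hc j) (Finsupp.le_def.mp hle j))
    obtain ⟨j0, hj0⟩ := hexj
    have hstrict : pWeight p (e j0) < pWeight p (m j0) := by
      have hj := Finsupp.le_def.mp hle j0
      have hcast : (((e j0 + (m j0 - e j0)).choose (e j0) : ℕ) : F) ≠ 0 := by
        rw [Nat.add_sub_cancel' hj]; exact hprod j0
      have hadd := pWeight_add_of_choose_ne_zero hp hcast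
      rw [Nat.add_sub_cancel' hj] at hadd
      have hpos : 1 ≤ pWeight p (m j0 - e j0) := by
        rcases hp with hp' | rfl
        · exact pWeight_pos hp' (by omega)
        · simp [pWeight]; omega
      omega
    exact Finset.sum_lt_sum (fun j _ => hwle j) ⟨j0, Finset.mem_univ j0, hstrict⟩
  · exact absurd rfl hTm

end Shift


section Defect
variable {F : Type*} [Field F]

/-- Defect indexed by a finite set, including the empty subset. -/
noncomputable def dOn {V ι : Type*} [AddCommMonoid V] (α : V → F) (A : Finset ι)
    (u : ι → V) : F :=
  ∑ S ∈ A.powerset, (-1 : F) ^ (A.card - S.card) * α (∑ i ∈ S, u i)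

variable {V ι : Type*} [AddCommMonoid V] [DecidableEq ι]

lemma dOn_insert (α : V → F) {A : Finset ι} {a : ι} (ha : a ∉ A) (u : ι → V) :
    dOn α (insert a A) u = dOn (fun x => α (x + u a) - α x) A u := by
  unfold dOn
  rw [Finset.sum_powerset_insert ha, Finset.card_insert_of_notMem ha]
  have h1 : ∀ S ∈ A.powerset,
      (-1 : F) ^ (A.card + 1 - S.card) * α (∑ i ∈ S, u i)
        = -((-1 : F) ^ (A.card - S.card) * α (∑ i ∈ S, u i)) := by
    intro S hS
    have hle : S.card ≤ A.card := Finset.card_le_card (Finset.mem_powerset.mp hS)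
    have h : A.card + 1 - S.card = (A.card - S.card) + 1 := by omega
    rw [h, pow_succ]
    ring
  have h2 : ∀ S ∈ A.powerset,
      (-1 : F) ^ (A.card + 1 - (insert a S).card) * α (∑ i ∈ insert a S, u i)
        = (-1 : F) ^ (A.card - S.card) * α ((∑ i ∈ S, u i) + u a) := by
    intro S hS
    have haS : a ∉ S := fun h => ha (Finset.mem_powerset.mp hS h)
    have hle : S.card ≤ A.card := Finset.card_le_card (Finset.mem_powerset.mp hS)
    rw [Finset.card_insert_of_notMem haS, Finset.sum_insert haS]
    have h : A.card + 1 - (S.card + 1) = A.card - S.card := by omega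
    rw [h, add_comm (u a)]
  rw [Finset.sum_congr rfl h1, Finset.sum_congr rfl h2, ← Finset.sum_add_distrib]
  refine Finset.sum_congr rfl fun S hS => ?_
  ring

lemma dOn_congr_fn {α β : V → F} (h : ∀ x, α x = β x) (A : Finset ι) (u : ι → V) :
    dOn α A u = dOn β A u := by
  unfold dOn
  exact Finset.sum_congr rfl fun S _ => by rw [h]

lemma dOn_congr_u {α : V → F} {A : Finset ι} {u u' : ι → V}
    (h : ∀ i ∈ A, u i = u' i) :
    dOn α A u = dOn α A u' := by
  unfold dOn
  refine Finset.sum_congr rfl fun S hS => ?_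
  have hS' := Finset.mem_powerset.mp hS
  rw [Finset.sum_congr rfl fun i hi => h i (hS' hi)]

lemma dOn_zero_fn {A : Finset ι} {u : ι → V} : dOn (fun _ => (0 : F)) A u = 0 := by
  unfold dOn
  simp

end Defect

section Vanish
variable {F : Type*} [Field F] {p : ℕ} [CharP F p] {d : ℕ}

lemma eval_sub_fun (v : Fin d → F) (f : MvPolynomial (Fin d) F) (x : Fin d → F) :
    eval (x + v) f - eval x f = eval x (shf v f - f) := by
  rw [map_sub, eval_shf]

lemma pDeg_shf_sub {n : ℕ} (hp : p.Prime ∨ p = 0) (v : Fin d → F)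
    {f : MvPolynomial (Fin d) F} (hdeg : pDeg p f ≤ n + 1) :
    pDeg p (shf v f - f) ≤ n := by
  refine Finset.sup_le fun e he => ?_
  obtain ⟨m, hm, _, hlt⟩ := support_shf_sub hp v f he
  have hs : (∑ j, pWeight p (m j)) ≤ pDeg p f :=
    Finset.le_sup (f := fun m => ∑ j, pWeight p (m j)) hm
  have h2 : (∑ j, pWeight p (m j)) ≤ n + 1 := le_trans hs hdeg
  omega

lemma shf_sub_eq_zero (hp : p.Prime ∨ p = 0) (v : Fin d → F)
    {f : MvPolynomial (Fin d) F} (hdeg : pDeg p f ≤ 0) :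
    shf v f - f = 0 := by
  rw [← support_eq_empty, Finset.eq_empty_iff_forall_notMem]
  intro e he
  obtain ⟨m, hm, _, hlt⟩ := support_shf_sub hp v f he
  have hs : (∑ j, pWeight p (m j)) ≤ pDeg p f :=
    Finset.le_sup (f := fun m => ∑ j, pWeight p (m j)) hm
  have h2 : (∑ j, pWeight p (m j)) ≤ 0 := le_trans hs hdeg
  omega

lemma vanish (hp : p.Prime ∨ p = 0) {ι : Type*} [DecidableEq ι] :
    ∀ (n : ℕ) (f : MvPolynomial (Fin d) F), pDeg p f ≤ n →
      ∀ (A : Finset ι), n < A.card → ∀ u : ι → Fin d → F,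
        dOn (fun x => eval x f) A u = 0 := by
  intro n
  induction n with
  | zero =>
    intro f hdeg A hA u
    obtain ⟨a, ha⟩ := Finset.card_pos.mp hA
    rw [← Finset.insert_erase ha, dOn_insert _ (Finset.notMem_erase a A)]
    rw [dOn_congr_fn (fun x => eval_sub_fun (u a) f x)]
    rw [dOn_congr_fn (fun x => by rw [shf_sub_eq_zero hp (u a) hdeg, map_zero])]
    exact dOn_zero_fn
  | succ n ih =>
    intro f hdeg A hA u
    have hA0 : 0 < A.card := by omega
    obtain ⟨a, ha⟩ := Finset.card_pos.mp hA0
    rw [← Finset.insert_erase ha, dOn_insert _ (Finset.notMem_erase a A)]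
    rw [dOn_congr_fn (fun x => eval_sub_fun (u a) f x)]
    refine ih (shf (u a) f - f) (pDeg_shf_sub hp (u a) hdeg) (A.erase a) ?_ u
    rw [Finset.card_erase_of_mem ha]
    omega

end Vanish

section NonVanish
variable {F : Type*} [Field F] {p : ℕ} [CharP F p] {d : ℕ}

lemma pWeight_eq_zero_iff' (hp : p.Prime ∨ p = 0) {t : ℕ} : pWeight p t = 0 ↔ t = 0 := by
  rcases hp with hp | rfl
  · exact pWeight_eq_zero_iff hp
  · simp [pWeight]

universe uF in
lemma exists_nonzero_eval {F : Type uF} [Field F] {d : ℕ}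
    (g : MvPolynomial (Fin d) F) (hg : g ≠ 0)
    (hred : Finite F → ∀ m ∈ g.support, ∀ j, m j < Nat.card F) :
    ∃ v : Fin d → F, eval v g ≠ 0 := by
  by_contra h
  push_neg at h
  cases finite_or_infinite F with
  | inr hinf =>
    exact hg (MvPolynomial.funext (q := 0) (fun x => by rw [h x, map_zero]))
  | inl hfin =>
    haveI : Fintype F := Fintype.ofFinite F
    apply hg
    have hup : Function.Injective (ULift.up.{uF} : Fin d → ULift.{uF} (Fin d)) :=
      fun a b hab => congrArg ULift.down hab
    classical
    set g' : MvPolynomial (ULift.{uF} (Fin d)) F := rename ULift.up g with hg'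
    have h0 : g' = 0 := by
      refine MvPolynomial.eq_zero_of_eval_eq_zero (ULift.{uF} (Fin d)) F g' (fun v => ?_) ?_
      · rw [hg', eval_rename]; exact h _
      · rw [mem_restrictDegree]
        intro s hs i
        rw [hg', support_rename_of_injective hup] at hs
        obtain ⟨sg, hsg, rfl⟩ := Finset.mem_image.mp hs
        have hmd : Finsupp.mapDomain ULift.up sg i = sg i.down := by
          conv_lhs => rw [show i = ULift.up i.down from rfl]
          rw [Finsupp.mapDomain_apply hup]
        rw [hmd]
        have h1 := hred hfin sg hsg i.down
        rw [Nat.card_eq_fintype_card] at h1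
        have h2 : 0 < Fintype.card F := Fintype.card_pos
        omega
    have : rename (ULift.up.{uF}) g = rename ULift.up (0 : MvPolynomial (Fin d) F) := by
      rw [← hg', h0, map_zero]
    exact rename_injective _ hup this

lemma nonvanish (hp : p.Prime ∨ p = 0) {ι : Type*} [DecidableEq ι] :
    ∀ (n : ℕ) (f : MvPolynomial (Fin d) F), f ≠ 0 → pDeg p f = n →
      (Finite F → ∀ m ∈ f.support, ∀ j, m j < Nat.card F) →
      ∀ (A : Finset ι), A.card = n →
        ∃ u : ι → Fin d → F, dOn (fun x => eval x f) A u ≠ 0 := by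
  intro n
  induction n with
  | zero =>
    intro f hf hdeg _ A hA
    rw [Finset.card_eq_zero] at hA
    subst hA
    refine ⟨fun _ => 0, ?_⟩
    have hne : f.support.Nonempty :=
      Finset.nonempty_iff_ne_empty.mpr (fun h => hf (support_eq_empty.mp h))
    obtain ⟨m, hm⟩ := hne
    have hm0 : m = 0 := by
      have hs : (∑ j, pWeight p (m j)) ≤ pDeg p f :=
        Finset.le_sup (f := fun m => ∑ j, pWeight p (m j)) hm
      rw [hdeg, Nat.le_zero] at hs
      ext j
      have hz : pWeight p (m j) = 0 :=
        (Finset.sum_eq_zero_iff.mp hs) j (Finset.mem_univ j)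
      simpa using (pWeight_eq_zero_iff' hp).mp hz
    unfold dOn
    rw [Finset.powerset_empty, Finset.sum_singleton]
    simp only [Finset.card_empty, Finset.sum_empty, pow_zero, one_mul, Nat.sub_self]
    rw [show (0 : Fin d → F) = (fun _ => 0 : Fin d → F) from rfl, eval_zero', constantCoeff_eq]
    rw [hm0] at hm
    exact mem_support_iff.mp hm
  | succ n ih =>
    intro f hf hdeg hred A hA
    classical
    -- top monomial
    have hne : f.support.Nonempty :=
      Finset.nonempty_iff_ne_empty.mpr (fun h => hf (support_eq_empty.mp h))
    obtain ⟨m₀, hm₀, hw₀⟩ := Finset.exists_mem_eq_sup f.support hne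
      (fun m => ∑ j, pWeight p (m j))
    rw [show f.support.sup (fun m => ∑ j, pWeight p (m j)) = pDeg p f from rfl, hdeg] at hw₀
    -- a coordinate with positive weight
    have hj0 : ∃ j0 : Fin d, pWeight p (m₀ j0) ≠ 0 := by
      by_contra hc
      push_neg at hc
      rw [Finset.sum_eq_zero (fun j _ => hc j)] at hw₀
      omega
    obtain ⟨j0, hj0⟩ := hj0
    have ht : m₀ j0 ≠ 0 := fun h => hj0 (by rw [h, pWeight_zero])
    obtain ⟨s, hst, hsw, hsc⟩ := exists_pWeight_pred (F := F) hp ht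
    set e₀ : Fin d →₀ ℕ := Finsupp.update m₀ j0 s with he₀def
    have he₀j0 : e₀ j0 = s := by rw [he₀def, Finsupp.coe_update, Function.update_self]
    have he₀ne : ∀ j ≠ j0, e₀ j = m₀ j := by
      intro j hj
      rw [he₀def, Finsupp.coe_update, Function.update_of_ne hj]
    have he₀le : e₀ ≤ m₀ := by
      rw [Finsupp.le_def]
      intro j
      rcases eq_or_ne j j0 with rfl | hj
      · rw [he₀j0]; omega
      · rw [he₀ne j hj]
    have hwe₀ : (∑ j, pWeight p (e₀ j)) = n := by
      have h1 := Finset.add_sum_erase Finset.univ (fun j => pWeight p (e₀ j)) (Finset.mem_univ j0)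
      have h2 := Finset.add_sum_erase Finset.univ (fun j => pWeight p (m₀ j)) (Finset.mem_univ j0)
      have h3 : ∑ j ∈ Finset.univ.erase j0, pWeight p (e₀ j)
          = ∑ j ∈ Finset.univ.erase j0, pWeight p (m₀ j) := by
        refine Finset.sum_congr rfl fun j hj => ?_
        rw [he₀ne j (Finset.mem_erase.mp hj).1]
      rw [he₀j0] at h1
      omega
    -- the auxiliary polynomial
    set g : MvPolynomial (Fin d) F :=
      (∑ m ∈ f.support, if e₀ ≤ m then
          monomial (m - e₀) (coeff m f * ∏ j, ((m j).choose (e₀ j) : F)) else 0)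
        - C (coeff e₀ f) with hgdef
    -- evaluation of g computes the e₀-coefficient of shf v f - f
    have hgeval : ∀ v : Fin d → F, eval v g = coeff e₀ (shf v f - f) := by
      intro v
      rw [hgdef, map_sub, eval_C, coeff_sub, coeff_shf, map_sum]
      congr 1
      refine Finset.sum_congr rfl fun m hm => ?_
      split_ifs with hle
      · have hpr : ∀ j ∈ Finset.univ, (((m j).choose (e₀ j) : F)) * v j ^ ((m - e₀) j)
            = ((m j).choose (e₀ j) : F) * v j ^ (m j - e₀ j) := fun j _ => by
          rw [Finsupp.tsub_apply]
        rw [eval_monomial, Finsupp.prod_pow, mul_assoc, ← Finset.prod_mul_distrib,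
          Finset.prod_congr rfl hpr]
      · rw [map_zero]
    -- g is nonzero
    have hgne : g ≠ 0 := by
      intro hg0
      have hc : coeff (m₀ - e₀) g = 0 := by rw [hg0, coeff_zero]
      rw [hgdef, coeff_sub, coeff_C] at hc
      have hne0 : m₀ - e₀ ≠ 0 := by
        intro h
        have h0 : (m₀ - e₀) j0 = 0 := by rw [h]; rfl
        rw [Finsupp.tsub_apply, he₀j0] at h0
        omega
      rw [if_neg (fun h => hne0 h.symm), sub_zero, coeff_sum] at hc
      have hsingle : ∀ m ∈ f.support, m ≠ m₀ →
          coeff (m₀ - e₀) (if e₀ ≤ m then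
            monomial (m - e₀) (coeff m f * ∏ j, ((m j).choose (e₀ j) : F)) else 0) = 0 := by
        intro m hm hmne
        split_ifs with hle
        · rw [coeff_monomial, if_neg]
          intro h
          apply hmne
          have := congrArg (fun k => k + e₀) h
          simpa [tsub_add_cancel_of_le hle, tsub_add_cancel_of_le he₀le] using this
        · exact coeff_zero _
      rw [Finset.sum_eq_single m₀ hsingle (fun h => absurd hm₀ h)] at hc
      rw [if_pos he₀le, coeff_monomial, if_pos rfl] at hc
      rcases mul_eq_zero.mp hc with h | h
      · exact (mem_support_iff.mp hm₀) h
      · rw [Finset.prod_eq_zero_iff] at h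
        obtain ⟨j, _, hj⟩ := h
        rcases eq_or_ne j j0 with rfl | hjne
        · rw [he₀j0] at hj
          exact hsc hj
        · rw [he₀ne j hjne, Nat.choose_self, Nat.cast_one] at hj
          exact one_ne_zero hj
    -- g is reduced
    have hgred : Finite F → ∀ k ∈ g.support, ∀ j, k j < Nat.card F := by
      intro hfin k hk j
      haveI := hfin
      have hcard : 0 < Nat.card F := Nat.card_pos
      rw [hgdef] at hk
      have hk' := MvPolynomial.support_sub _ _ _ hk
      rw [Finset.mem_union] at hk'
      rcases hk' with hk' | hk'
      · have := MvPolynomial.support_sum hk'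
        rw [Finset.mem_biUnion] at this
        obtain ⟨m, hm, hkm⟩ := this
        by_cases hle : e₀ ≤ m
        · rw [if_pos hle] at hkm
          have hk2 := MvPolynomial.support_monomial_subset hkm
          rw [Finset.mem_singleton] at hk2
          subst hk2
          rw [Finsupp.tsub_apply]
          have h1 := hred hfin m hm j
          omega
        · rw [if_neg hle] at hkm
          simp at hkm
      · rw [MvPolynomial.C_apply] at hk'
        have hk2 := MvPolynomial.support_monomial_subset hk'
        rw [Finset.mem_singleton] at hk2
        subst hk2
        simpa using hcard
    -- pick a good point v
    obtain ⟨v, hv⟩ := exists_nonzero_eval g hgne hgred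
    rw [hgeval v] at hv
    set fv := shf v f - f with hfvdef
    have hfvne : fv ≠ 0 := fun h => hv (by rw [hfvdef] at h ⊢; rw [h, coeff_zero])
    have hfvdeg : pDeg p fv = n := by
      refine le_antisymm (pDeg_shf_sub hp v (le_of_eq hdeg)) ?_
      have he₀supp : e₀ ∈ fv.support := mem_support_iff.mpr hv
      have h2 : (∑ j, pWeight p (e₀ j)) ≤ pDeg p fv :=
        Finset.le_sup (f := fun m => ∑ j, pWeight p (m j)) he₀supp
      rw [hwe₀] at h2
      exact h2
    have hfvred : Finite F → ∀ m ∈ fv.support, ∀ j, m j < Nat.card F := by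
      intro hfin e he j
      obtain ⟨m, hm, hle, _⟩ := support_shf_sub hp v f he
      have h1 := Finsupp.le_def.mp hle j
      have h2 := hred hfin m hm j
      omega
    -- induction
    have hA0 : 0 < A.card := by omega
    obtain ⟨a, ha⟩ := Finset.card_pos.mp hA0
    obtain ⟨u', hu'⟩ := ih fv hfvne hfvdeg hfvred (A.erase a)
      (by rw [Finset.card_erase_of_mem ha]; omega)
    refine ⟨Function.update u' a v, ?_⟩
    rw [← Finset.insert_erase ha, dOn_insert _ (Finset.notMem_erase a A)]
    rw [dOn_congr_fn (fun x => by
      rw [Function.update_self, eval_sub_fun v f x, ← hfvdef])]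
    rw [dOn_congr_u (fun i hi => Function.update_of_ne (Finset.mem_erase.mp hi).1 v u')]
    exact hu'

end NonVanish


section Convert
variable {F : Type*} [Field F]

lemma dOn_univ_eq {V : Type*} [AddCommGroup V] (α : V → F) (hα : α 0 = 0) (n : ℕ)
    (u : Fin n → V) :
    dOn α (Finset.univ : Finset (Fin n)) u = fnDefect α n u := by
  unfold dOn fnDefect
  rw [← Finset.sum_filter_add_sum_filter_not Finset.univ.powerset
    (fun S : Finset (Fin n) => S.Nonempty)
    (fun S => (-1 : F) ^ ((Finset.univ : Finset (Fin n)).card - S.card) * α (∑ i ∈ S, u i))]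
  have h1 : ∀ S ∈ Finset.univ.powerset.filter (fun S : Finset (Fin n) => ¬S.Nonempty),
      (-1 : F) ^ ((Finset.univ : Finset (Fin n)).card - S.card) * α (∑ i ∈ S, u i) = 0 := by
    intro S hS
    rw [Finset.mem_filter] at hS
    have hS2 : S = ∅ := Finset.not_nonempty_iff_eq_empty.mp hS.2
    subst hS2
    rw [Finset.sum_empty, hα, mul_zero]
  rw [Finset.sum_eq_zero h1, add_zero]
  refine Finset.sum_congr rfl fun S _ => ?_
  rw [Finset.card_univ, Fintype.card_fin]

end Convert

/-- let `f` be a nonzero polynomial with `f(0) = 0` over a field `F` of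
characteristic `p` (prime or zero), and if `F` is finite assume that `f` is reduced (all
exponents `< |F|`). Then the combinatorial degree of the evaluation function
`α = f^~ : F^d → F`, i.e. the `N` with `Δ^N α ≢ 0` and `Δ^{N+1} α ≡ 0`,
equals `deg_p f`. -/
theorem combinatorial_degree_of_evaluation_eq_pDeg
    {F : Type*} [Field F] {p : ℕ} [CharP F p] (hp : p.Prime ∨ p = 0)
    {d : ℕ} (f : MvPolynomial (Fin d) F) (hf : f ≠ 0)
    (h0 : MvPolynomial.constantCoeff f = 0)
    (hred : Finite F → ∀ m ∈ f.support, ∀ j, m j < Nat.card F)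
    (N : ℕ) (hN : N = pDeg p f) :
    (∃ u : Fin N → (Fin d → F), fnDefect (fun a => MvPolynomial.eval a f) N u ≠ 0) ∧
    (∀ u : Fin (N + 1) → (Fin d → F),
      fnDefect (fun a => MvPolynomial.eval a f) (N + 1) u = 0) := by
  have hα : (fun a : Fin d → F => MvPolynomial.eval a f) 0 = 0 := by
    show MvPolynomial.eval (0 : Fin d → F) f = 0
    rw [MvPolynomial.eval_zero]
    exact h0
  constructor
  · obtain ⟨u, hu⟩ := nonvanish hp N f hf hN.symm hred (Finset.univ : Finset (Fin N))
      (by rw [Finset.card_univ, Fintype.card_fin])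
    refine ⟨u, ?_⟩
    rw [← dOn_univ_eq _ hα N u]
    exact hu
  · intro u
    rw [← dOn_univ_eq _ hα (N + 1) u]
    exact vanish hp N f (le_of_eq hN.symm) (Finset.univ : Finset (Fin (N + 1)))
      (by rw [Finset.card_univ, Fintype.card_fin]; omega) u
end

section
/- Let F be a field of characteristic p with n < p (in particular any n when p = 0, so that n! is invertible in F), let V be an F-vector space, and let φ : V^n → F be a symmetric n-additive form. Define α : V → F by α(u) = φ(u,…,u)/n!. Then Δ^n α = φ. -/
open Finset Function

private lemma neg_one_pow_sub' {F : Type*} [Field F] {n k : ℕ} (h : k ≤ n) :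
    ((-1 : F)) ^ (n - k) = (-1) ^ n * (-1) ^ k := by
  have h2 : ((-1 : F)) ^ (n - k) * (-1) ^ k = (-1) ^ n := by
    rw [← pow_add, Nat.sub_add_cancel h]
  calc ((-1 : F)) ^ (n - k) = (-1) ^ (n - k) * ((-1 : F) ^ k * (-1) ^ k) := by
        rw [← pow_add, ← two_mul, pow_mul]; simp
    _ = (-1) ^ n * (-1) ^ k := by rw [← mul_assoc, h2]

private lemma aux_incl_excl {F : Type*} [Field F] {n : ℕ} (R : Finset (Fin n)) :
    ∑ S ∈ Finset.univ.powerset.filter (fun S => R ⊆ S), ((-1 : F)) ^ (n - S.card)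
      = if R = Finset.univ then 1 else 0 := by
  have h1 : ∑ S ∈ Finset.univ.powerset.filter (fun S => R ⊆ S), ((-1 : F)) ^ (n - S.card)
      = ∑ T ∈ Rᶜ.powerset, ((-1 : F)) ^ (n - (T ∪ R).card) := by
    refine Finset.sum_nbij' (fun S => S \ R) (fun T => T ∪ R) ?_ ?_ ?_ ?_ ?_
    · intro S hS
      simp only [Finset.mem_filter, Finset.mem_powerset] at hS ⊢
      intro x hx
      simp only [Finset.mem_sdiff] at hx
      simp [Finset.mem_compl, hx.2]
    · intro T hT
      simp only [Finset.mem_powerset] at hT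
      simp only [Finset.mem_filter, Finset.mem_powerset]
      exact ⟨Finset.subset_univ _, Finset.subset_union_right⟩
    · intro S hS
      simp only [Finset.mem_filter, Finset.mem_powerset] at hS
      show S \ R ∪ R = S
      rw [Finset.sdiff_union_of_subset hS.2]
    · intro T hT
      simp only [Finset.mem_powerset] at hT
      show (T ∪ R) \ R = T
      rw [Finset.union_sdiff_right, Finset.sdiff_eq_self_iff_disjoint]
      exact Finset.disjoint_left.2 fun x hx => by
        have := hT hx; simp only [Finset.mem_compl] at this; exact this
    · intro S hS
      simp only [Finset.mem_filter, Finset.mem_powerset] at hS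
      show (-1 : F) ^ (n - S.card) = (-1 : F) ^ (n - (S \ R ∪ R).card)
      rw [Finset.sdiff_union_of_subset hS.2]
  rw [h1]
  have h2 : ∀ T ∈ Rᶜ.powerset, ((-1 : F)) ^ (n - (T ∪ R).card)
      = ((-1 : F) ^ n * (-1) ^ R.card) * (-1) ^ T.card := by
    intro T hT
    simp only [Finset.mem_powerset] at hT
    have hdisj : Disjoint T R := Finset.disjoint_left.2 fun x hx => by
      have := hT hx; simp only [Finset.mem_compl] at this; exact this
    rw [Finset.card_union_of_disjoint hdisj]
    have hle : T.card + R.card ≤ n := by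
      rw [← Finset.card_union_of_disjoint hdisj]
      exact (Finset.card_le_univ _).trans_eq (by simp)
    rw [neg_one_pow_sub' hle, pow_add]
    ring
  have hint : ∑ T ∈ Rᶜ.powerset, ((-1 : F)) ^ T.card
      = if Rᶜ = ∅ then 1 else 0 := by
    have := Finset.sum_powerset_neg_one_pow_card (x := Rᶜ)
    have hcast := congrArg (fun z : ℤ => (z : F)) this
    push_cast at hcast
    convert hcast using 2
  rw [Finset.sum_congr rfl h2, ← Finset.mul_sum, hint]
  by_cases hR : R = Finset.univ
  · subst hR
    simp [Finset.card_univ, ← pow_add, ← two_mul, pow_mul]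
  · have : Rᶜ ≠ ∅ := by
      intro h
      apply hR
      rwa [Finset.compl_eq_empty_iff] at h
    simp [this, hR]

/-- let `F` have characteristic `p` with `n < p` (in particular any `n` when
`p = 0`), so that `n!` is invertible in `F`, and let `φ : V^n → F` be a symmetric
`n`-additive form. Then `α(u) = φ(u,…,u)/n!` satisfies `Δ^n α = φ`. -/
theorem defect_of_diagonal_div_factorial
    {F V : Type*} [Field F] [AddCommGroup V] [Module F V]
    {p : ℕ} [CharP F p] {n : ℕ} (hn : 1 ≤ n) (hp : p = 0 ∨ n < p)
    (φ : (Fin n → V) → F)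
    (hsym : ∀ (w : Fin n → V) (σ : Equiv.Perm (Fin n)), φ (w ∘ σ) = φ w)
    (hadd : ∀ (w : Fin n → V) (i : Fin n) (x y : V),
      φ (Function.update w i (x + y)) =
        φ (Function.update w i x) + φ (Function.update w i y))
    (α : V → F) (hα : ∀ u : V, α u = (n.factorial : F)⁻¹ * φ (fun _ => u)) :
    ∀ u : Fin n → V, fnDefect α n u = φ u := by
  -- n! is invertible
  have hfac : (n.factorial : F) ≠ 0 := by
    intro h
    rw [CharP.cast_eq_zero_iff F p] at h
    rcases hp with hp0 | hnp
    · subst hp0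
      simp only [Nat.zero_dvd] at h
      exact Nat.factorial_ne_zero n h
    · rcases CharP.char_is_prime_or_zero F p with hpr | h0
      · exact absurd (hpr.dvd_factorial.1 h) (by omega)
      · omega
  -- build the ℤ-multilinear map
  have hadd' : ∀ (inst : DecidableEq (Fin n)) (w : Fin n → V) (i : Fin n) (x y : V),
      φ (@Function.update _ _ inst w i (x + y)) =
        φ (@Function.update _ _ inst w i x) + φ (@Function.update _ _ inst w i y) := by
    intro inst w i x y
    rw [Subsingleton.elim inst (instDecidableEqFin n)]
    exact hadd w i x y
  let Φ : MultilinearMap ℤ (fun _ : Fin n => V) F :=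
    { toFun := φ
      map_update_add' := fun {dec} w i x y => hadd' dec w i x y
      map_update_smul' := by
        intro dec w i c x
        have h := AddMonoidHom.map_zsmul (AddMonoidHom.mk'
          (fun z => φ (@Function.update _ _ dec w i z))
          (fun z y => hadd' dec w i z y)) c x
        simpa using h }
  intro u
  -- expand each term via multilinearity
  have hexp : ∀ S : Finset (Fin n), φ (fun _ => ∑ i ∈ S, u i)
      = ∑ r ∈ Fintype.piFinset (fun _ : Fin n => S), φ (fun i => u (r i)) := by
    intro S
    have := Φ.map_sum_finset (fun _ j => u j) (fun _ => S)
    simpa [Φ] using this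
  have key : fnDefect α n u
      = (n.factorial : F)⁻¹ *
        ∑ S ∈ Finset.univ.powerset.filter (fun S : Finset (Fin n) => S.Nonempty),
          ∑ r ∈ Fintype.piFinset (fun _ : Fin n => S),
            (-1 : F) ^ (n - S.card) * φ (fun i => u (r i)) := by
    rw [fnDefect, Finset.mul_sum]
    refine Finset.sum_congr rfl fun S hS => ?_
    simp only [hα, hexp, Finset.mul_sum]
    exact Finset.sum_congr rfl fun r hr => by ring
  rw [key]
  -- swap the sums
  have hswap : ∑ S ∈ Finset.univ.powerset.filter (fun S : Finset (Fin n) => S.Nonempty),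
          ∑ r ∈ Fintype.piFinset (fun _ : Fin n => S),
            (-1 : F) ^ (n - S.card) * φ (fun i => u (r i))
      = ∑ r ∈ (Finset.univ : Finset (Fin n → Fin n)),
          ∑ S ∈ Finset.univ.powerset.filter
              (fun S : Finset (Fin n) => Finset.image r Finset.univ ⊆ S),
            (-1 : F) ^ (n - S.card) * φ (fun i => u (r i)) := by
    refine Finset.sum_comm' ?_
    intro S r
    simp only [Finset.mem_filter, Finset.mem_powerset, Fintype.mem_piFinset,
      Finset.mem_univ, and_true, true_and, Finset.image_subset_iff]
    constructor
    · rintro ⟨⟨-, -⟩, h⟩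
      exact ⟨Finset.subset_univ _, fun i _ => h i⟩
    · rintro ⟨-, h⟩
      have i0 : Fin n := ⟨0, hn⟩
      exact ⟨⟨Finset.subset_univ _, ⟨r i0, h i0 trivial⟩⟩,
        fun i => h i trivial⟩
  rw [hswap]
  -- evaluate the inner sum: nonzero only for surjective r
  have hinner : ∀ r : Fin n → Fin n,
      ∑ S ∈ Finset.univ.powerset.filter
          (fun S : Finset (Fin n) => Finset.image r Finset.univ ⊆ S),
        (-1 : F) ^ (n - S.card) * φ (fun i => u (r i))
      = (if Finset.image r Finset.univ = Finset.univ then 1 else 0) * φ (fun i => u (r i)) := by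
    intro r
    rw [← Finset.sum_mul, aux_incl_excl]
  rw [Finset.sum_congr rfl (fun r _ => hinner r)]
  simp only [ite_mul, one_mul, zero_mul]
  rw [← Finset.sum_filter]
  -- the surjective maps are exactly the permutations
  have hbij : ∑ r ∈ Finset.univ.filter
        (fun r : Fin n → Fin n => Finset.image r Finset.univ = Finset.univ),
        φ (fun i => u (r i))
      = ∑ σ : Equiv.Perm (Fin n), φ (fun i => u (σ i)) := by
    have hb : ∀ r : Fin n → Fin n,
        Finset.image r Finset.univ = Finset.univ → Function.Bijective r := by
      intro r hr
      rw [← Finite.surjective_iff_bijective]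
      intro y
      have : y ∈ Finset.image r Finset.univ := by rw [hr]; exact Finset.mem_univ y
      obtain ⟨x, -, hx⟩ := Finset.mem_image.1 this
      exact ⟨x, hx⟩
    refine Finset.sum_bij' (fun r hr => Equiv.ofBijective r
        (hb r (by simpa using hr)))
      (fun σ _ => ⇑σ) ?_ ?_ ?_ ?_ ?_
    · intro r hr; exact Finset.mem_univ _
    · intro σ _
      simp only [Finset.mem_filter, Finset.mem_univ, true_and]
      ext y
      simp only [Finset.mem_image, Finset.mem_univ, true_and, iff_true]
      exact ⟨σ.symm y, σ.apply_symm_apply y⟩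
    · intro r hr; rfl
    · intro σ _; ext x; rfl
    · intro r hr; rfl
  rw [hbij]
  have hres : ∀ σ : Equiv.Perm (Fin n), φ (fun i => u (σ i)) = φ u := fun σ => hsym u σ
  rw [Finset.sum_congr rfl (fun σ _ => hres σ), Finset.sum_const, Finset.card_univ,
    Fintype.card_perm, Fintype.card_fin, nsmul_eq_mul]
  rw [← mul_assoc, inv_mul_cancel₀ hfac, one_mul]
end
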